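/- arXiv:1908.00291 — 3 statements merged into one kernel-verified Lean document; each statement's English description precedes it below -/
import Mathlib

section
/- Let v be an admissible weight function. If sup{ v(x)/v(y) : 0 ≤ x ≤ y } = ∞, then there exists f ∈ C_{0,v}(ℝ₊) such that T_t f does not converge to 0 in norm as t → ∞. -/
open MeasureTheory Filter Set
open scoped ENNReal

/-- The `L^p_v` norm of a function on `[0,∞)`:
`‖f‖ = (∫₀^∞ |f(x)|^p v(x) dx)^(1/p)`. -/
noncomputable def lpNorm (p : ℝ) (v : ℝ → ℝ) (f : ℝ → ℝ) : ℝ :=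
  (∫ x in Set.Ici (0:ℝ), |f x| ^ p * v x) ^ (1 / p)

/-- Membership in the weighted Lebesgue space `L^p_v(ℝ₊)`. -/
def MemLpW (p : ℝ) (v : ℝ → ℝ) (f : ℝ → ℝ) : Prop :=
  AEStronglyMeasurable f (volume.restrict (Set.Ici (0:ℝ))) ∧
    IntegrableOn (fun x => |f x| ^ p * v x) (Set.Ici (0:ℝ))

/-- The left translation operator `(T_t f)(x) = f (x + t)`. -/
def translateW (t : ℝ) (f : ℝ → ℝ) : ℝ → ℝ := fun x => f (x + t)

/-- `v` is an admissible weight function: strictly positive, locally integrable on `[0,∞)`,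
and there are `M ≥ 1`, `w ≥ 0` with `v x ≤ M * exp (w*t) * v (x+t)` for all `x, t ≥ 0`. -/
def AdmissibleWeight (v : ℝ → ℝ) : Prop :=
  (∀ x, 0 ≤ x → 0 < v x) ∧
  (∀ a, 0 ≤ a → IntegrableOn v (Set.Icc (0:ℝ) a)) ∧
  ∃ M, 1 ≤ M ∧ ∃ w, 0 ≤ w ∧ ∀ x, 0 ≤ x → ∀ t, 0 ≤ t →
    v x ≤ M * Real.exp (w * t) * v (x + t)

/-- The set `{ v x / v y : 0 ≤ x ≤ y }`. -/
def ratioSet (v : ℝ → ℝ) : Set ℝ := {r | ∃ x y, 0 ≤ x ∧ x ≤ y ∧ r = v x / v y}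

/-- Membership in `C_{0,v}(ℝ₊)`: continuous on `[0,∞)` with `|f x| * v x → 0` as `x → ∞`. -/
def MemC0 (v : ℝ → ℝ) (f : ℝ → ℝ) : Prop :=
  ContinuousOn f (Set.Ici (0:ℝ)) ∧
    Filter.Tendsto (fun x => |f x| * v x) Filter.atTop (nhds 0)

/-- The norm on `C_{0,v}(ℝ₊)`: `‖f‖ = sup { |f x| * v x : x ≥ 0 }`. -/
noncomputable def c0Norm (v : ℝ → ℝ) (f : ℝ → ℝ) : ℝ :=
  sSup ((fun x => |f x| * v x) '' Set.Ici (0:ℝ))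

/-!
Since `v x ≤ M e^{w (y - x)} v y`, pairs `x_n ≤ y_n` with `v x_n / v y_n` large enough have
`y_n - x_n > n + 1` and `v x_n ≥ 2^n M e^{2w} v y_n`. Let `f` be the sum of the tents of height
`1 / v x_n` supported in `(y_n - 2, y_n)`. On that support `v ≤ M e^{2w} v y_n`, so the `n`-th tent
contributes at most `2^{-n}` to `|f| v`; hence `f ∈ C_{0,v}`. Translating by `y_n - 1 - x_n` moves
the peak of the `n`-th tent to `x_n`, where the weighted value is `1`, so `‖T_t f‖ ≥ 1` along a
sequence `t → ∞`.
-/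

open Topology

def tent (c s : ℝ) : ℝ := max 0 (1 - |s - c|)

lemma tent_nonneg (c s : ℝ) : 0 ≤ tent c s := le_max_left _ _

lemma tent_le_one (c s : ℝ) : tent c s ≤ 1 :=
  max_le zero_le_one (sub_le_self _ (abs_nonneg _))

@[simp] lemma tent_self (c : ℝ) : tent c c = 1 := by simp [tent]

lemma abs_sub_lt_one_of_tent_ne_zero {c s : ℝ} (h : tent c s ≠ 0) : |s - c| < 1 := by
  by_contra! hs
  exact h (max_eq_left (by linarith))

lemma continuous_tent (c : ℝ) : Continuous (tent c) := by
  unfold tent; fun_prop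

noncomputable def tentSeries (a c : ℕ → ℝ) (s : ℝ) : ℝ := ∑' n, a n * tent (c n) s

section tentSeries

variable {v : ℝ → ℝ} {a c : ℕ → ℝ} {s : ℝ}

lemma tentSeries_term_nonneg (ha : ∀ n, 0 ≤ a n) (n : ℕ) (s : ℝ) : 0 ≤ a n * tent (c n) s :=
  mul_nonneg (ha n) (tent_nonneg _ _)

lemma tentSeries_term_mul_le (ha : ∀ n, 0 ≤ a n)
    (hsmall : ∀ n s, 0 ≤ s → |s - c n| < 1 → a n * v s ≤ (1 / 2) ^ n)
    (hv : 0 ≤ v s) (hs : 0 ≤ s) (n : ℕ) : a n * tent (c n) s * v s ≤ (1 / 2) ^ n := by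
  by_cases h : tent (c n) s = 0
  · simp [h]
  · calc a n * tent (c n) s * v s ≤ a n * 1 * v s := by gcongr; exacts [ha n, tent_le_one _ _]
      _ ≤ (1 / 2) ^ n := by simpa using hsmall n s hs (abs_sub_lt_one_of_tent_ne_zero h)

lemma summable_tentSeries_term (ha : ∀ n, 0 ≤ a n)
    (hsmall : ∀ n s, 0 ≤ s → |s - c n| < 1 → a n * v s ≤ (1 / 2) ^ n)
    (hv : 0 < v s) (hs : 0 ≤ s) : Summable fun n => a n * tent (c n) s := by
  refine (summable_geometric_two.div_const (v s)).of_nonneg_of_le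
    (tentSeries_term_nonneg ha · s) fun n => ?_
  rw [le_div_iff₀ hv]
  exact tentSeries_term_mul_le ha hsmall hv.le hs n

lemma tentSeries_nonneg (ha : ∀ n, 0 ≤ a n) (s : ℝ) : 0 ≤ tentSeries a c s :=
  tsum_nonneg (tentSeries_term_nonneg ha · s)

lemma tentSeries_mul_le (ha : ∀ n, 0 ≤ a n)
    (hsmall : ∀ n s, 0 ≤ s → |s - c n| < 1 → a n * v s ≤ (1 / 2) ^ n)
    (hv : 0 < v s) (hs : 0 ≤ s) : tentSeries a c s * v s ≤ 2 := by
  rw [tentSeries, ← tsum_mul_right, ← tsum_geometric_two]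
  exact ((summable_tentSeries_term ha hsmall hv hs).mul_right _).tsum_le_tsum
    (tentSeries_term_mul_le ha hsmall hv.le hs) summable_geometric_two

lemma le_tentSeries (ha : ∀ n, 0 ≤ a n)
    (hsmall : ∀ n s, 0 ≤ s → |s - c n| < 1 → a n * v s ≤ (1 / 2) ^ n)
    (hv : 0 < v (c n)) (hc : 0 ≤ c n) : a n ≤ tentSeries a c (c n) := by
  simpa [tentSeries] using (summable_tentSeries_term ha hsmall hv hc).le_tsum n
    fun k _ => tentSeries_term_nonneg ha k _

lemma continuousOn_tentSeries (ha : ∀ n, 0 ≤ a n)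
    (hsmall : ∀ n s, 0 ≤ s → |s - c n| < 1 → a n * v s ≤ (1 / 2) ^ n)
    (hlow : ∀ b, ∃ m > 0, ∀ s ∈ Icc 0 b, m ≤ v s) :
    ContinuousOn (tentSeries a c) (Ici 0) := by
  intro s₀ hs₀
  obtain ⟨m, hm, hmv⟩ := hlow (s₀ + 1)
  have hcont : ContinuousOn (tentSeries a c) (Icc 0 (s₀ + 1)) := by
    refine continuousOn_tsum (fun n => ((continuous_tent _).const_mul _).continuousOn)
      (summable_geometric_two.div_const m) fun n s hs => ?_
    have hvs : 0 < v s := hm.trans_le (hmv s hs)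
    rw [Real.norm_of_nonneg (tentSeries_term_nonneg ha n s), le_div_iff₀ hm]
    calc a n * tent (c n) s * m ≤ a n * tent (c n) s * v s := by
          gcongr; exacts [tentSeries_term_nonneg ha n s, hmv s hs]
      _ ≤ (1 / 2) ^ n := tentSeries_term_mul_le ha hsmall hvs.le hs.1 n
  refine (hcont s₀ ⟨hs₀, by linarith⟩).mono_of_mem_nhdsWithin ?_
  rw [← Ici_inter_Iic]
  exact inter_mem_nhdsWithin _ (Iic_mem_nhds (by linarith))

lemma tendsto_tentSeries_mul (ha : ∀ n, 0 ≤ a n)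
    (hsmall : ∀ n s, 0 ≤ s → |s - c n| < 1 → a n * v s ≤ (1 / 2) ^ n)
    (hpos : ∀ s, 0 ≤ s → 0 < v s) :
    Tendsto (fun s => tentSeries a c s * v s) atTop (𝓝 0) := by
  have hterm (n : ℕ) : Tendsto (fun s => a n * tent (c n) s * v s) atTop (𝓝 0) := by
    refine tendsto_const_nhds.congr' ?_
    filter_upwards [eventually_ge_atTop (c n + 1)] with s hs
    have : tent (c n) s = 0 := by
      by_contra h
      have := (abs_lt.1 (abs_sub_lt_one_of_tent_ne_zero h)).2
      linarith
    simp [this]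
  have := tendsto_tsum_of_dominated_convergence summable_geometric_two hterm ?_
  · simpa [tentSeries, tsum_mul_right] using this
  filter_upwards [eventually_ge_atTop 0] with s hs n
  rw [Real.norm_of_nonneg (mul_nonneg (tentSeries_term_nonneg ha n s) (hpos s hs).le)]
  exact tentSeries_term_mul_le ha hsmall (hpos s hs).le hs n

lemma memC0_tentSeries (ha : ∀ n, 0 ≤ a n)
    (hsmall : ∀ n s, 0 ≤ s → |s - c n| < 1 → a n * v s ≤ (1 / 2) ^ n)
    (hpos : ∀ s, 0 ≤ s → 0 < v s) (hlow : ∀ b, ∃ m > 0, ∀ s ∈ Icc 0 b, m ≤ v s) :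
    MemC0 v (tentSeries a c) := by
  refine ⟨continuousOn_tentSeries ha hsmall hlow, ?_⟩
  simpa only [abs_of_nonneg (tentSeries_nonneg ha _)] using tendsto_tentSeries_mul ha hsmall hpos

end tentSeries

def HasGrowthBound (v : ℝ → ℝ) (M w : ℝ) : Prop :=
  ∀ x, 0 ≤ x → ∀ t, 0 ≤ t → v x ≤ M * Real.exp (w * t) * v (x + t)

namespace HasGrowthBound

variable {v : ℝ → ℝ} {M w x y d : ℝ}

lemma le_mul_exp_mul (h : HasGrowthBound v M w) (hM : 0 ≤ M) (hw : 0 ≤ w) (hy : 0 < v y)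
    (hx : 0 ≤ x) (hxy : x ≤ y) (hd : y - x ≤ d) : v x ≤ M * Real.exp (w * d) * v y :=
  calc v x ≤ M * Real.exp (w * (y - x)) * v (x + (y - x)) := h x hx _ (sub_nonneg.2 hxy)
    _ = M * Real.exp (w * (y - x)) * v y := by rw [add_sub_cancel]
    _ ≤ M * Real.exp (w * d) * v y := by gcongr

lemma lt_sub_of_lt_div (h : HasGrowthBound v M w) (hM : 0 ≤ M) (hw : 0 ≤ w) (hy : 0 < v y)
    (hx : 0 ≤ x) (hxy : x ≤ y) (hr : M * Real.exp (w * d) < v x / v y) : d < y - x := by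
  by_contra! hd
  rw [lt_div_iff₀ hy] at hr
  exact hr.not_ge (h.le_mul_exp_mul hM hw hy hx hxy hd)

lemma exists_pos_le (h : HasGrowthBound v M w) (hM : 0 < M) (hw : 0 ≤ w)
    (hpos : ∀ s, 0 ≤ s → 0 < v s) (b : ℝ) : ∃ m > 0, ∀ s ∈ Icc 0 b, m ≤ v s := by
  refine ⟨v 0 / (M * Real.exp (w * b)), by have := hpos 0 le_rfl; positivity, fun s hs => ?_⟩
  rw [div_le_iff₀ (by positivity), mul_comm]
  exact h.le_mul_exp_mul hM.le hw (hpos s hs.1) le_rfl hs.1 (by simpa using hs.2)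

lemma le_c0Norm_translateW (h : HasGrowthBound v M w) (hM : 0 ≤ M) {f : ℝ → ℝ} {C t : ℝ}
    (hf : ∀ s, 0 ≤ s → |f s| * v s ≤ C) (ht : 0 ≤ t) (hx : 0 ≤ x) :
    |f (x + t)| * v x ≤ c0Norm v (translateW t f) := by
  -- `c0Norm` is an `sSup`, whose junk value `0` must be excluded by bounding the image above.
  refine le_csSup ⟨M * Real.exp (w * t) * C, ?_⟩ ⟨x, hx, rfl⟩
  rintro _ ⟨s, hs, rfl⟩
  have hs : 0 ≤ s := hs
  calc |f (s + t)| * v s ≤ |f (s + t)| * (M * Real.exp (w * t) * v (s + t)) := by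
        gcongr; exact h s hs t ht
    _ = M * Real.exp (w * t) * (|f (s + t)| * v (s + t)) := by ring
    _ ≤ M * Real.exp (w * t) * C := by gcongr; exact hf _ (by linarith)

lemma le_c0Norm_translateW_tentSeries (h : HasGrowthBound v M w) (hM : 0 ≤ M)
    {a c : ℕ → ℝ} (ha : ∀ n, 0 ≤ a n)
    (hsmall : ∀ n s, 0 ≤ s → |s - c n| < 1 → a n * v s ≤ (1 / 2) ^ n)
    (hpos : ∀ s, 0 ≤ s → 0 < v s) (n : ℕ) (hx : 0 ≤ x) (hxc : x ≤ c n) :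
    a n * v x ≤ c0Norm v (translateW (c n - x) (tentSeries a c)) := by
  have hc : 0 ≤ c n := hx.trans hxc
  have hf (s : ℝ) (hs : 0 ≤ s) : |tentSeries a c s| * v s ≤ 2 := by
    rw [abs_of_nonneg (tentSeries_nonneg ha s)]
    exact tentSeries_mul_le ha hsmall (hpos s hs) hs
  calc a n * v x ≤ |tentSeries a c (x + (c n - x))| * v x := by
        rw [add_sub_cancel, abs_of_nonneg (tentSeries_nonneg ha _)]
        exact mul_le_mul_of_nonneg_right (le_tentSeries ha hsmall (hpos _ hc) hc) (hpos _ hx).le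
    _ ≤ _ := h.le_c0Norm_translateW hM hf (sub_nonneg.2 hxc) hx

lemma exists_seq_of_unbounded_ratio (h : HasGrowthBound v M w) (hM : 0 ≤ M) (hw : 0 ≤ w)
    (hpos : ∀ s, 0 ≤ s → 0 < v s) (hsup : ∀ B : ℝ, ∃ r ∈ ratioSet v, B < r) :
    ∃ x y : ℕ → ℝ, ∀ n, 0 ≤ x n ∧ (n : ℝ) + 1 < y n - x n ∧
      ∀ s, 0 ≤ s → |s - (y n - 1)| < 1 → (v (x n))⁻¹ * v s ≤ (1 / 2) ^ n := by
  choose r hr hB using fun n : ℕ =>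
    hsup (max (M * Real.exp (w * (n + 1))) (2 ^ n * (M * Real.exp (w * 2))))
  choose x y hx hxy hrxy using hr
  simp only [hrxy, max_lt_iff] at hB
  refine ⟨x, y, fun n => ⟨hx n, ?_, fun s hs hsy => ?_⟩⟩
  · exact h.lt_sub_of_lt_div hM hw (hpos _ ((hx n).trans (hxy n))) (hx n) (hxy n) (hB n).1
  obtain ⟨h₁, h₂⟩ := abs_lt.1 hsy
  have hvy : 0 < v (y n) := hpos _ (by linarith)
  have hvs := h.le_mul_exp_mul (d := 2) hM hw hvy hs (by linarith) (by linarith)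
  have hvx := (lt_div_iff₀ hvy).1 (hB n).2
  rw [inv_mul_le_iff₀ (hpos _ (hx n)), one_div, inv_pow, ← div_eq_mul_inv,
    le_div_iff₀ (by positivity)]
  nlinarith [pow_pos (two_pos (α := ℝ)) n]

end HasGrowthBound

theorem c0_exists_not_tendsto_zero_of_unbounded_ratio
    (v : ℝ → ℝ) (hv : AdmissibleWeight v)
    (hsup : ∀ B : ℝ, ∃ r ∈ ratioSet v, B < r) :
    ∃ f, MemC0 v f ∧
      ¬ Filter.Tendsto (fun t => c0Norm v (translateW t f)) Filter.atTop (nhds 0) := by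
  obtain ⟨hpos, -, M, hM, w, hw, hg⟩ := hv
  replace hg : HasGrowthBound v M w := hg
  obtain ⟨x, y, hxy⟩ := hg.exists_seq_of_unbounded_ratio (by linarith) hw hpos hsup
  choose hx hgap hsmall using hxy
  have ha (n : ℕ) : 0 ≤ (v (x n))⁻¹ := (inv_pos.2 (hpos _ (hx n))).le
  refine ⟨tentSeries (fun n => (v (x n))⁻¹) (fun n => y n - 1),
    memC0_tentSeries ha hsmall hpos (hg.exists_pos_le (by linarith) hw hpos), fun hT => ?_⟩
  have hnorm (n : ℕ) : 1 ≤ c0Norm v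
      (translateW (y n - 1 - x n) (tentSeries (fun n => (v (x n))⁻¹) (fun n => y n - 1))) := by
    simpa [inv_mul_cancel₀ (hpos _ (hx n)).ne'] using
      hg.le_c0Norm_translateW_tentSeries (by linarith) ha hsmall hpos n (hx n)
        (by linarith [hgap n])
  have ht : Tendsto (fun n : ℕ => y n - 1 - x n) atTop atTop :=
    tendsto_atTop_mono (fun n => by linarith [hgap n]) tendsto_natCast_atTop_atTop
  exact absurd (ge_of_tendsto' (hT.comp ht) hnorm) (by norm_num)
end

section
/- Let 0 < p < ∞ and let v be an admissible weight function. If sup{ v(x)/v(y) : 0 ≤ x ≤ y } = ∞, then the semigroup 𝒯 = {T_t : t ≥ 0} of left translation operators on L^p_v(ℝ₊) has infinite topological entropy: there exists a compact set K ⊆ L^p_v(ℝ₊) with h(𝒯,K) = ∞. -/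
open MeasureTheory Filter Set
open scoped ENNReal

/-- `S` is a `(t,ε)`-separated set for the family `{T_u : u ≥ 0}` with respect to the
distance `d`: distinct points of `S` are `ε`-apart at some time `u ∈ [0,t]`. -/
def IsSepSet {X : Type*} (d : X → X → ℝ) (T : ℝ → X → X) (t ε : ℝ) (S : Set X) : Prop :=
  ∀ f ∈ S, ∀ g ∈ S, f ≠ g → ∃ u ∈ Set.Icc (0:ℝ) t, ε ≤ d (T u f) (T u g)

/-- The largest cardinality `s_{t,ε}(𝒯,K)` of a `(t,ε)`-separated subset of `K`
(as an extended natural number, viewed in `ℝ≥0∞`). -/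
noncomputable def maxSep {X : Type*} (d : X → X → ℝ) (T : ℝ → X → X) (K : Set X)
    (t ε : ℝ) : ℝ≥0∞ :=
  ⨆ (S : Finset X) (_ : ↑S ⊆ K ∧ IsSepSet d T t ε ↑S), (S.card : ℝ≥0∞)

open Classical in
/-- Extended-real logarithm of an extended nonnegative real. -/
noncomputable def elog (x : ℝ≥0∞) : EReal :=
  if x = ⊤ then ⊤ else ((Real.log x.toReal : ℝ) : EReal)

/-- The topological entropy `h(𝒯,K)` of the family `{T_u : u ≥ 0}` on the set `K`,
with respect to the distance `d`; since `ε ↦ limsup_t (1/t) log s_{t,ε}` is antitone,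
the limit as `ε → 0⁺` is the supremum over `ε > 0`. -/
noncomputable def entropyOn {X : Type*} (d : X → X → ℝ) (T : ℝ → X → X) (K : Set X) : EReal :=
  ⨆ (ε : ℝ) (_ : 0 < ε),
    Filter.limsup (fun t : ℝ => ((t⁻¹ : ℝ) : EReal) * elog (maxSep d T K t ε)) Filter.atTop

/-- Sequential compactness of a set with respect to a (pseudo)distance `d`; for metric
spaces this is equivalent to compactness. -/
def DSeqCompact {X : Type*} (d : X → X → ℝ) (K : Set X) : Prop :=
  ∀ u : ℕ → X, (∀ n, u n ∈ K) → ∃ g ∈ K, ∃ φ : ℕ → ℕ, StrictMono φ ∧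
    Filter.Tendsto (fun n => d (u (φ n)) g) Filter.atTop (nhds 0)

/-- The topological entropy `h(𝒯) = sup { h(𝒯,K) : K ⊆ A compact }` of the family
`{T_u : u ≥ 0}` on the space `A`, with respect to the distance `d`. -/
noncomputable def entropyFam {X : Type*} (d : X → X → ℝ) (T : ℝ → X → X) (A : Set X) : EReal :=
  ⨆ (K : Set X) (_ : K ⊆ A ∧ DSeqCompact d K), entropyOn d T K

/-!
Pick `0 ≤ x < y` with `v x / v y` huge. Admissibility forces `y - x` to be large and makes `v`
comparable to `v y` on `[y - 1, y]` and to `v x` on `[x, x + 1]`. Cut `[y - 1, y)` into `2 ^ N`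
equal pieces and take the step functions `h • (-1) ^ ⟪b, ·⟫` indexed by `b ∈ 𝔽₂ ^ N` (Walsh
functions). They have small norm because `v y` is small, while the translation by
`t = y - 1 - x` moves them onto `[x, x + 1)`, where `v` is large and any two of them differ by
`2 h` on half of the pieces (distinct Hadamard codewords differ in half of their positions), so
they are `(t, 1)`-separated. As `N` may be of order `c t` for any `c`, the union `K` of `{0}` and
of such families, with norms tending to `0`, has infinite entropy; it is compact because its
points accumulate only at `0`.
-/

open Matrix

section HadamardCode

open Finset

-- Adding `Pi.single i 1`, where `c i = 1`, swaps the two level sets of `c ⬝ᵥ ·`.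
lemma two_mul_card_dotProduct_eq_one {N : ℕ} {c : Fin N → ZMod 2} (hc : c ≠ 0) :
    2 * #{x | c ⬝ᵥ x = 1} = 2 ^ N := by
  obtain ⟨i, hi⟩ := Function.ne_iff.1 hc
  have hci : c i = 1 := (by decide : ∀ z : ZMod 2, z ≠ 0 → z = 1) _ hi
  have hflip : ∀ x, c ⬝ᵥ (x + Pi.single i 1) = c ⬝ᵥ x + 1 := by
    simp [dotProduct_add, dotProduct_single, hci]
  have hinv : ∀ x : Fin N → ZMod 2, x + Pi.single i 1 + Pi.single i 1 = x := by
    intro x; ext j; rw [Pi.add_apply, Pi.add_apply, add_assoc]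
    generalize x j = z; generalize (Pi.single i 1 : Fin N → ZMod 2) j = z'; decide +revert
  have hswap : #{x | c ⬝ᵥ x = 1} = #{x | ¬ c ⬝ᵥ x = 1} := by
    refine card_nbij' (· + Pi.single i 1) (· + Pi.single i 1) ?_ ?_ (fun x _ => hinv x)
      (fun x _ => hinv x)
    all_goals
      intro x hx
      simp only [coe_filter, Finset.mem_univ, true_and, Set.mem_ofPred_eq, hflip] at hx ⊢
      revert hx; generalize c ⬝ᵥ x = z; decide +revert
  have htotal := card_filter_add_card_filter_not (s := univ) (fun x => c ⬝ᵥ x = 1)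
  simp only [card_univ, Fintype.card_fun, ZMod.card, Fintype.card_fin] at htotal
  omega

-- Lists `𝔽₂ ^ N` as `k = 0, …, 2 ^ N - 1`; larger `k` are read modulo `2 ^ N`.
noncomputable def cubeEnum (N k : ℕ) : Fin N → ZMod 2 :=
  (Fintype.equivFinOfCardEq (by simp) : (Fin N → ZMod 2) ≃ Fin (2 ^ N)).symm (Fin.ofNat _ k)

lemma sum_range_cubeEnum {R : Type*} [AddCommMonoid R] (N : ℕ) (G : (Fin N → ZMod 2) → R) :
    ∑ k ∈ range (2 ^ N), G (cubeEnum N k) = ∑ x, G x := by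
  rw [← Fin.sum_univ_eq_sum_range]
  simp only [cubeEnum, Fin.ofNat_val_eq_self]
  exact Equiv.sum_comp _ G

noncomputable def walshSign (N : ℕ) (a : Fin N → ZMod 2) (k : ℕ) : ℝ :=
  if a ⬝ᵥ cubeEnum N k = 0 then 1 else -1

lemma abs_walshSign (N : ℕ) (a : Fin N → ZMod 2) (k : ℕ) : |walshSign N a k| = 1 := by
  unfold walshSign; split_ifs <;> simp

lemma two_pow_le_two_mul_sum_abs_sub_walshSign_rpow {N : ℕ} {a b : Fin N → ZMod 2}
    (hab : a ≠ b) {p : ℝ} (hp : 0 < p) :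
    (2 : ℝ) ^ N ≤ 2 * ∑ k ∈ range (2 ^ N), |walshSign N a k - walshSign N b k| ^ p := by
  have hterm : ∀ k, (if (a - b) ⬝ᵥ cubeEnum N k = 1 then 1 else 0 : ℝ) ≤
      |walshSign N a k - walshSign N b k| ^ p := by
    intro k
    have h2 : (1 : ℝ) ≤ 2 ^ p := Real.one_le_rpow (by norm_num) hp.le
    have h01 : ∀ z : ZMod 2, z = 0 ∨ z = 1 := by decide
    rw [sub_dotProduct, walshSign, walshSign]
    rcases h01 (a ⬝ᵥ cubeEnum N k) with h | h <;> rcases h01 (b ⬝ᵥ cubeEnum N k) with h' | h' <;>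
      simp +decide [h, h', Real.zero_rpow hp.ne'] <;> norm_num [h2]
  have hcount := two_mul_card_dotProduct_eq_one (sub_ne_zero.2 hab)
  calc (2 : ℝ) ^ N = 2 * ∑ x, (if (a - b) ⬝ᵥ x = 1 then 1 else 0 : ℝ) := by
        rw [← Nat.cast_ofNat, ← Nat.cast_pow, ← hcount, card_filter]; push_cast; rfl
    _ = 2 * ∑ k ∈ range (2 ^ N), (if (a - b) ⬝ᵥ cubeEnum N k = 1 then 1 else 0 : ℝ) :=
        congrArg (2 * ·) (sum_range_cubeEnum N fun x => if (a - b) ⬝ᵥ x = 1 then 1 else 0).symm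
    _ ≤ 2 * ∑ k ∈ range (2 ^ N), |walshSign N a k - walshSign N b k| ^ p := by
        gcongr with k; exact hterm k

end HadamardCode

section StepFunctions

noncomputable def stepFun (a : ℝ) (m : ℕ) (c : ℕ → ℝ) : ℝ → ℝ :=
  (Ico a (a + 1)).indicator fun s => c ⌊(s - a) * m⌋₊

lemma translateW_stepFun (t a : ℝ) (m : ℕ) (c : ℕ → ℝ) :
    translateW t (stepFun (a + t) m c) = stepFun a m c := by
  ext s
  simp only [translateW, stepFun, indicator_apply, mem_Ico, add_sub_add_right_eq_sub]
  congr 1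
  apply propext
  constructor <;> rintro ⟨h₁, h₂⟩ <;> constructor <;> linarith

lemma stepFun_sub (a : ℝ) (m : ℕ) (c c' : ℕ → ℝ) :
    stepFun a m c - stepFun a m c' = stepFun a m (c - c') := by
  ext s
  simp only [stepFun, Pi.sub_apply, indicator_apply]
  split_ifs <;> simp

lemma stepFun_of_notMem {a s : ℝ} {m : ℕ} {c : ℕ → ℝ} (hs : s ∉ Ico a (a + 1)) :
    stepFun a m c s = 0 :=
  indicator_of_notMem hs _

lemma measurable_stepFun (a : ℝ) (m : ℕ) (c : ℕ → ℝ) : Measurable (stepFun a m c) :=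
  (measurable_from_nat.comp (Nat.measurable_floor.comp
    ((measurable_id.sub_const a).mul_const _))).indicator measurableSet_Ico

lemma abs_stepFun_le {a β : ℝ} {m : ℕ} {c : ℕ → ℝ} (hc : ∀ k, |c k| ≤ β) (s : ℝ) :
    |stepFun a m c s| ≤ β := by
  by_cases hs : s ∈ Ico a (a + 1)
  · rw [stepFun, indicator_of_mem hs]; exact hc _
  · rw [stepFun_of_notMem hs, abs_zero]; exact (abs_nonneg _).trans (hc 0)

lemma integrableOn_Ico_natFloor (G : ℕ → ℝ) (m : ℕ) :
    IntegrableOn (fun u => G ⌊u⌋₊) (Ico (0 : ℝ) m) := by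
  induction m with
  | zero => simp
  | succ m ih =>
    rw [Nat.cast_succ, ← Ico_union_Ico_eq_Ico (Nat.cast_nonneg m) (by linarith)]
    refine ih.union ((integrableOn_const (C := G m) (by simp)).congr_fun ?_ measurableSet_Ico)
    intro u hu
    simp only [Nat.floor_eq_on_Ico m u hu]

lemma setIntegral_Ico_natFloor (G : ℕ → ℝ) (m : ℕ) :
    ∫ u in Ico (0 : ℝ) m, G ⌊u⌋₊ = ∑ k ∈ Finset.range m, G k := by
  induction m with
  | zero => simp
  | succ m ih =>
    have hpiece : ∫ u in Ico (m : ℝ) (m + 1), G ⌊u⌋₊ = G m := by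
      rw [setIntegral_congr_fun measurableSet_Ico (fun u hu => by rw [Nat.floor_eq_on_Ico m u hu])]
      simp
    rw [Nat.cast_succ, ← Ico_union_Ico_eq_Ico (Nat.cast_nonneg m) (by linarith),
      setIntegral_union Ico_disjoint_Ico_same measurableSet_Ico (integrableOn_Ico_natFloor G m),
      ih, hpiece, Finset.sum_range_succ]
    refine (integrableOn_Ico_natFloor G (m + 1)).mono_set ?_
    push_cast
    exact Ico_subset_Ico (Nat.cast_nonneg m) le_rfl

lemma setIntegral_stepFun (G : ℝ → ℝ) (a : ℝ) {m : ℕ} (hm : 0 < m) (c : ℕ → ℝ) :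
    ∫ s in Ico a (a + 1), G (stepFun a m c s) = (∑ k ∈ Finset.range m, G (c k)) / m := by
  have hm' : (0 : ℝ) < m := Nat.cast_pos.2 hm
  have hmem : ∀ s, s ∈ Ico a (a + 1) ↔ (s - a) * m ∈ Ico (0 : ℝ) m := by
    intro s
    rw [mem_Ico, mem_Ico, mul_nonneg_iff_of_pos_right hm', mul_lt_iff_lt_one_left hm', sub_nonneg,
      sub_lt_iff_lt_add']
  calc ∫ s in Ico a (a + 1), G (stepFun a m c s)
      = ∫ s, (Ico (0 : ℝ) m).indicator (fun u => G (c ⌊u⌋₊)) ((s - a) * m) := by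
        rw [← integral_indicator measurableSet_Ico]
        congr 1; ext s
        by_cases hs : s ∈ Ico a (a + 1)
        · rw [indicator_of_mem hs, indicator_of_mem ((hmem s).1 hs), stepFun, indicator_of_mem hs]
        · rw [indicator_of_notMem hs, indicator_of_notMem (mt (hmem s).2 hs)]
    _ = ∫ u, (Ico (0 : ℝ) m).indicator (fun u => G (c ⌊u⌋₊)) (u * m) :=
        integral_sub_right_eq_self (fun u => (Ico (0 : ℝ) m).indicator _ (u * m)) a
    _ = (∑ k ∈ Finset.range m, G (c k)) / m := by
        rw [Measure.integral_comp_mul_right, integral_indicator measurableSet_Ico,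
          setIntegral_Ico_natFloor (fun k => G (c k)), abs_of_pos (inv_pos.2 hm'), smul_eq_mul,
          inv_mul_eq_div]

lemma weightedIntegral_eq_setIntegral_Ico {p a : ℝ} (hp : p ≠ 0) (ha : 0 ≤ a) {f v : ℝ → ℝ}
    (hf : ∀ s ∉ Ico a (a + 1), f s = 0) :
    ∫ s in Ici 0, |f s| ^ p * v s = ∫ s in Ico a (a + 1), |f s| ^ p * v s :=
  setIntegral_eq_of_subset_of_forall_sdiff_eq_zero measurableSet_Ici (fun _ hs => ha.trans hs.1)
    (fun s hs => by simp [hf s hs.2, Real.zero_rpow hp])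

lemma integrableOn_abs_stepFun_rpow_mul {p a β : ℝ} (hp : 0 ≤ p) {m : ℕ} {c : ℕ → ℝ}
    (hc : ∀ k, |c k| ≤ β) {g : ℝ → ℝ} {s : Set ℝ} (hg : IntegrableOn g s) :
    IntegrableOn (fun x => |stepFun a m c x| ^ p * g x) s :=
  Integrable.bdd_mul hg ((measurable_stepFun a m c).abs.pow_const p).aestronglyMeasurable
    (ae_of_all _ fun x => by
      rw [Real.norm_eq_abs, abs_of_nonneg (by positivity)]
      exact Real.rpow_le_rpow (abs_nonneg _) (abs_stepFun_le hc x) hp)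

lemma memLpW_stepFun {p a β : ℝ} (hp : 0 < p) {m : ℕ} {c : ℕ → ℝ}
    (hc : ∀ k, |c k| ≤ β) {v : ℝ → ℝ} (hv : IntegrableOn v (Ico a (a + 1))) :
    MemLpW p v (stepFun a m c) :=
  ⟨(measurable_stepFun a m c).aestronglyMeasurable,
    (integrableOn_abs_stepFun_rpow_mul hp.le hc hv).of_forall_sdiff_eq_zero measurableSet_Ici
      fun s hs => by simp [stepFun_of_notMem hs.2, Real.zero_rpow hp.ne']⟩

lemma weightedIntegral_stepFun_le {p a β B : ℝ} (hp : 0 < p) (ha : 0 ≤ a) {m : ℕ} (hm : 0 < m)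
    {c : ℕ → ℝ} (hc : ∀ k, |c k| ≤ β) {v : ℝ → ℝ} (hv : IntegrableOn v (Ico a (a + 1)))
    (hvB : ∀ s ∈ Ico a (a + 1), v s ≤ B) :
    ∫ s in Ici 0, |stepFun a m c s| ^ p * v s ≤ B * (∑ k ∈ Finset.range m, |c k| ^ p) / m := by
  rw [weightedIntegral_eq_setIntegral_Ico hp.ne' ha fun _ => stepFun_of_notMem]
  calc ∫ s in Ico a (a + 1), |stepFun a m c s| ^ p * v s
      ≤ ∫ s in Ico a (a + 1), |stepFun a m c s| ^ p * B :=
        setIntegral_mono_on (integrableOn_abs_stepFun_rpow_mul hp.le hc hv)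
          (integrableOn_abs_stepFun_rpow_mul hp.le hc (integrableOn_const (by simp)))
          measurableSet_Ico fun s hs => mul_le_mul_of_nonneg_left (hvB s hs) (by positivity)
    _ = B * (∑ k ∈ Finset.range m, |c k| ^ p) / m := by
        rw [integral_mul_const, setIntegral_stepFun (|·| ^ p) a hm c]; ring

lemma le_weightedIntegral_stepFun {p a β κ : ℝ} (hp : 0 < p) (ha : 0 ≤ a) {m : ℕ} (hm : 0 < m)
    {c : ℕ → ℝ} (hc : ∀ k, |c k| ≤ β) {v : ℝ → ℝ} (hv : IntegrableOn v (Ico a (a + 1)))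
    (hvκ : ∀ s ∈ Ico a (a + 1), κ ≤ v s) :
    κ * (∑ k ∈ Finset.range m, |c k| ^ p) / m ≤ ∫ s in Ici 0, |stepFun a m c s| ^ p * v s := by
  rw [weightedIntegral_eq_setIntegral_Ico hp.ne' ha fun _ => stepFun_of_notMem]
  calc κ * (∑ k ∈ Finset.range m, |c k| ^ p) / m
      = ∫ s in Ico a (a + 1), |stepFun a m c s| ^ p * κ := by
        rw [integral_mul_const, setIntegral_stepFun (|·| ^ p) a hm c]; ring
    _ ≤ ∫ s in Ico a (a + 1), |stepFun a m c s| ^ p * v s :=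
        setIntegral_mono_on
          (integrableOn_abs_stepFun_rpow_mul hp.le hc (integrableOn_const (by simp)))
          (integrableOn_abs_stepFun_rpow_mul hp.le hc hv)
          measurableSet_Ico fun s hs => mul_le_mul_of_nonneg_left (hvκ s hs) (by positivity)

end StepFunctions

section WeightedNorm

variable {p : ℝ} {v f : ℝ → ℝ}

lemma weightedIntegral_nonneg (hv : ∀ x, 0 ≤ x → 0 ≤ v x) :
    0 ≤ ∫ x in Ici 0, |f x| ^ p * v x :=
  setIntegral_nonneg measurableSet_Ici fun x hx => mul_nonneg (by positivity) (hv x hx)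

lemma lpNorm_nonneg (hv : ∀ x, 0 ≤ x → 0 ≤ v x) : 0 ≤ lpNorm p v f :=
  Real.rpow_nonneg (weightedIntegral_nonneg hv) _

lemma lpNorm_zero (hp : p ≠ 0) : lpNorm p v 0 = 0 := by
  simp [_root_.lpNorm, Real.zero_rpow hp, Real.zero_rpow (inv_ne_zero hp)]

lemma memLpW_zero (hp : p ≠ 0) : MemLpW p v 0 :=
  ⟨aestronglyMeasurable_const, by simp [Real.zero_rpow hp]⟩

lemma lpNorm_le_of_weightedIntegral_le (hp : 0 < p) (hv : ∀ x, 0 ≤ x → 0 ≤ v x) {r : ℝ}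
    (hr : 0 ≤ r) (h : ∫ x in Ici 0, |f x| ^ p * v x ≤ r ^ p) : lpNorm p v f ≤ r :=
  calc lpNorm p v f ≤ (r ^ p) ^ (1 / p) :=
        Real.rpow_le_rpow (weightedIntegral_nonneg hv) h (by positivity)
    _ = r := by rw [one_div, Real.rpow_rpow_inv hr hp.ne']

lemma one_le_lpNorm_of_one_le_weightedIntegral (hp : 0 < p)
    (h : 1 ≤ ∫ x in Ici 0, |f x| ^ p * v x) : 1 ≤ lpNorm p v f :=
  Real.one_le_rpow h (by positivity)

end WeightedNorm

section WalshFamily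

noncomputable def walshFun (N : ℕ) (h a : ℝ) (b : Fin N → ZMod 2) : ℝ → ℝ :=
  stepFun a (2 ^ N) fun k => h * walshSign N b k

lemma translateW_walshFun (N : ℕ) (h t a : ℝ) (b : Fin N → ZMod 2) :
    translateW t (walshFun N h (a + t) b) = walshFun N h a b :=
  translateW_stepFun t a _ _

lemma abs_walshFun_coeff (N : ℕ) (h : ℝ) (b : Fin N → ZMod 2) (k : ℕ) :
    |h * walshSign N b k| = |h| := by
  rw [abs_mul, abs_walshSign, mul_one]

lemma memLpW_walshFun {p : ℝ} (hp : 0 < p) (N : ℕ) (h a : ℝ) (b : Fin N → ZMod 2) {v : ℝ → ℝ}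
    (hv : IntegrableOn v (Ico a (a + 1))) : MemLpW p v (walshFun N h a b) :=
  memLpW_stepFun hp (fun k => (abs_walshFun_coeff N h b k).le) hv

lemma lpNorm_walshFun_le {p a B δ : ℝ} (hp : 0 < p) (ha : 0 ≤ a) (N : ℕ) (h : ℝ)
    (b : Fin N → ZMod 2) {v : ℝ → ℝ} (hv₀ : ∀ x, 0 ≤ x → 0 ≤ v x)
    (hv : IntegrableOn v (Ico a (a + 1))) (hvB : ∀ s ∈ Ico a (a + 1), v s ≤ B) (hδ : 0 ≤ δ)
    (hBδ : B * |h| ^ p ≤ δ ^ p) : lpNorm p v (walshFun N h a b) ≤ δ := by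
  refine lpNorm_le_of_weightedIntegral_le hp hv₀ hδ (le_trans ?_ hBδ)
  refine (weightedIntegral_stepFun_le hp ha (Nat.two_pow_pos N)
    (fun k => (abs_walshFun_coeff N h b k).le) hv hvB).trans_eq ?_
  simp only [abs_walshFun_coeff, Finset.sum_const, Finset.card_range, nsmul_eq_mul]
  push_cast
  field_simp

lemma one_le_lpNorm_walshFun_sub {p a κ : ℝ} (hp : 0 < p) (ha : 0 ≤ a) {N : ℕ} (h : ℝ)
    {b b' : Fin N → ZMod 2} (hbb' : b ≠ b') {v : ℝ → ℝ} (hv : IntegrableOn v (Ico a (a + 1)))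
    (hvκ : ∀ s ∈ Ico a (a + 1), κ ≤ v s) (hκ : 2 ≤ κ * |h| ^ p) :
    1 ≤ lpNorm p v (walshFun N h a b - walshFun N h a b') := by
  have hcoeff : ∀ k, |((fun k => h * walshSign N b k) - fun k => h * walshSign N b' k) k|
      ≤ |h| + |h| := fun k => by
    simpa only [Pi.sub_apply, abs_walshFun_coeff] using
      abs_sub (h * walshSign N b k) (h * walshSign N b' k)
  refine one_le_lpNorm_of_one_le_weightedIntegral hp ?_
  rw [walshFun, walshFun, stepFun_sub]
  refine le_trans ?_ (le_weightedIntegral_stepFun hp ha (Nat.two_pow_pos N) hcoeff hv hvκ)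
  have hsum := two_pow_le_two_mul_sum_abs_sub_walshSign_rpow hbb' hp
  simp only [Pi.sub_apply, ← mul_sub, abs_mul, Real.mul_rpow (abs_nonneg h) (abs_nonneg _),
    ← Finset.mul_sum]
  push_cast
  have hsum_nonneg : 0 ≤ ∑ k ∈ Finset.range (2 ^ N), |walshSign N b k - walshSign N b' k| ^ p :=
    Finset.sum_nonneg fun k _ => by positivity
  rw [le_div_iff₀ (by positivity), ← mul_assoc]
  nlinarith [mul_le_mul_of_nonneg_right hκ hsum_nonneg]

end WalshFamily

namespace AdmissibleWeight

variable {v : ℝ → ℝ}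

lemma integrableOn_Ico (hv : AdmissibleWeight v) {a : ℝ} (ha : 0 ≤ a) :
    IntegrableOn v (Ico a (a + 1)) :=
  (hv.2.1 (a + 1) (by linarith)).mono_set (Ico_subset_Icc_self.trans (Icc_subset_Icc_left ha))

lemma exists_le_mul_of_le_add_one (hv : AdmissibleWeight v) :
    ∃ C > 0, ∀ s r, 0 ≤ s → s ≤ r → r ≤ s + 1 → v s ≤ C * v r := by
  obtain ⟨hpos, -, M, hM, w, hw, hbd⟩ := hv
  refine ⟨M * Real.exp w, by positivity, fun s r hs hsr hr => ?_⟩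
  have h := hbd s hs (r - s) (by linarith)
  rw [add_sub_cancel] at h
  refine h.trans ?_
  have : w * (r - s) ≤ w := by nlinarith
  gcongr
  exact (hpos r (by linarith)).le

lemma exists_far_pair (hv : AdmissibleWeight v) (hsup : ∀ B : ℝ, ∃ r ∈ ratioSet v, B < r)
    (T B : ℝ) : ∃ x y, 0 ≤ x ∧ T < y - x ∧ B * v y < v x := by
  obtain ⟨hpos, -, M, hM, w, hw, hbd⟩ := hv
  obtain ⟨_, ⟨x, y, hx, hxy, rfl⟩, hr⟩ := hsup (max B (M * Real.exp (w * T)))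
  have hvy : 0 < v y := hpos y (hx.trans hxy)
  rw [max_lt_iff, lt_div_iff₀ hvy, lt_div_iff₀ hvy] at hr
  refine ⟨x, y, hx, ?_, hr.1⟩
  by_contra! hle
  have h := hbd x hx (y - x) (by linarith)
  rw [add_sub_cancel] at h
  have : M * Real.exp (w * (y - x)) * v y ≤ M * Real.exp (w * T) * v y := by gcongr
  linarith [hr.2]

end AdmissibleWeight

lemma isSepSet_image {X ι : Type*} [DecidableEq X] {d : X → X → ℝ} {T : ℝ → X → X} {t ε : ℝ}
    (ht : 0 ≤ t) (s : Finset ι) (f : ι → X)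
    (hf : ∀ b ∈ s, ∀ b' ∈ s, b ≠ b' → ε ≤ d (T t (f b)) (T t (f b'))) :
    IsSepSet d T t ε ↑(s.image f) := by
  intro _ hg _ hg' hne
  obtain ⟨b, hb, rfl⟩ := Finset.mem_image.1 hg
  obtain ⟨b', hb', rfl⟩ := Finset.mem_image.1 hg'
  exact ⟨t, ⟨ht, le_rfl⟩, hf b hb b' hb' fun h => hne (h ▸ rfl)⟩

lemma exp_le_two_pow_ceil (r : ℝ) : Real.exp r ≤ 2 ^ ⌈r / Real.log 2⌉₊ := by
  have hr : r ≤ ⌈r / Real.log 2⌉₊ * Real.log 2 :=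
    (div_le_iff₀ (Real.log_pos one_lt_two)).1 (Nat.le_ceil _)
  calc Real.exp r ≤ Real.exp (⌈r / Real.log 2⌉₊ * Real.log 2) := Real.exp_le_exp.2 hr
    _ = 2 ^ ⌈r / Real.log 2⌉₊ := by rw [← Real.log_pow, Real.exp_log (by positivity)]

theorem exists_large_separated_set {p : ℝ} (hp : 0 < p) {v : ℝ → ℝ} (hv : AdmissibleWeight v)
    (hsup : ∀ B : ℝ, ∃ r ∈ ratioSet v, B < r) {δ : ℝ} (hδ : 0 < δ) (c a : ℝ) :
    ∃ t, a ≤ t ∧ 0 < t ∧ ∃ S : Finset (ℝ → ℝ), (∀ f ∈ S, MemLpW p v f ∧ lpNorm p v f ≤ δ) ∧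
      IsSepSet (fun f g => lpNorm p v (f - g)) translateW t 1 ↑S ∧
      Real.exp (c * t) ≤ S.card := by
  classical
  obtain ⟨C, hC, hcomp⟩ := hv.exists_le_mul_of_le_add_one
  obtain ⟨x, y, hx, hgap, hxy⟩ := hv.exists_far_pair hsup (|a| + 2) (2 * C ^ 2 / δ ^ p)
  set t := y - 1 - x
  have ht : 1 ≤ t := by linarith [abs_nonneg a]
  have hvx := hv.1 x hx
  have hxt : 0 ≤ x + t := by linarith
  -- `h` makes the separation estimate on `[x, x + 1)` come out exactly; the ratio `2 C² / δ ^ p`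
  -- was chosen so that it also makes the norms at most `δ`.
  set h := (2 * C / v x) ^ p⁻¹
  have hh : |h| ^ p = 2 * C / v x := by
    rw [abs_of_nonneg (by positivity), Real.rpow_inv_rpow (by positivity) hp.ne']
  set f := walshFun ⌈c * t / Real.log 2⌉₊ h (x + t)
  have hnorm : ∀ b, lpNorm p v (f b) ≤ δ := fun b => by
    refine lpNorm_walshFun_le hp hxt _ h b (fun s hs => (hv.1 s hs).le) (hv.integrableOn_Ico hxt)
      (B := C * v y) (fun s hs => hcomp s y (hxt.trans hs.1) (by linarith [hs.2])
        (by linarith [hs.1])) hδ.le ?_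
    rw [div_mul_eq_mul_div, div_lt_iff₀ (by positivity)] at hxy
    rw [hh, mul_div_assoc', div_le_iff₀ hvx]
    nlinarith
  have hsep : ∀ b b', b ≠ b' → 1 ≤ lpNorm p v (translateW t (f b) - translateW t (f b')) :=
    fun b b' hbb' => by
    rw [translateW_walshFun, translateW_walshFun]
    refine one_le_lpNorm_walshFun_sub hp hx h hbb' (hv.integrableOn_Ico hx) (κ := v x / C)
      (fun s hs => (div_le_iff₀' hC).2 (hcomp x s hx hs.1 hs.2.le)) ?_
    refine le_of_eq ?_
    rw [hh]; field_simp
  have hinj : Function.Injective f := fun b b' hbb' => by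
    by_contra hne
    have := hsep b b' hne
    rw [hbb', sub_self, lpNorm_zero hp.ne'] at this
    linarith
  refine ⟨t, by linarith [le_abs_self a], by linarith, Finset.univ.image f, ?_, ?_, ?_⟩
  · intro _ hf
    obtain ⟨b, -, rfl⟩ := Finset.mem_image.1 hf
    exact ⟨memLpW_walshFun hp _ h _ b (hv.integrableOn_Ico hxt), hnorm b⟩
  · exact isSepSet_image (by linarith) _ f fun b _ b' _ => hsep b b'
  · rw [Finset.card_image_of_injective _ hinj, Finset.card_univ, Fintype.card_fun, ZMod.card,
      Fintype.card_fin]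
    exact_mod_cast exp_le_two_pow_ceil (c * t)

lemma dSeqCompact_insert_iUnion {X : Type*} {d : X → X → ℝ} (hd : ∀ f g, 0 ≤ d f g)
    (hdd : ∀ f, d f f = 0) {x₀ : X} {S : ℕ → Finset X} {ε : ℕ → ℝ}
    (hε : Tendsto ε atTop (nhds 0)) (hS : ∀ n, ∀ f ∈ S n, d f x₀ ≤ ε n) :
    DSeqCompact d (insert x₀ (⋃ n, (S n : Set X))) := by
  classical
  intro u hu
  by_cases hrep : ∃ f, ∃ᶠ i in atTop, u i = f
  · obtain ⟨f, hf⟩ := hrep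
    obtain ⟨φ, hφ, hφf⟩ := extraction_of_frequently_atTop hf
    refine ⟨f, hφf 0 ▸ hu (φ 0), φ, hφ, ?_⟩
    simp only [hφf, hdd, tendsto_const_nhds]
  simp only [not_exists, not_frequently] at hrep
  refine ⟨x₀, mem_insert _ _, id, strictMono_id, tendsto_order.2 ⟨fun b hb =>
    Eventually.of_forall fun i => hb.trans_le (hd _ _), fun b hb => ?_⟩⟩
  obtain ⟨n₀, hn₀⟩ := eventually_atTop.1 ((tendsto_order.1 hε).2 b hb)
  have hfar : ∀ᶠ i in atTop, ∀ f ∈ (Finset.range n₀).biUnion S, u i ≠ f :=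
    (eventually_all_finset _).2 fun f _ => hrep f
  filter_upwards [hfar] with i hi
  rcases hu i with hi₀ | hiS
  · simpa [hi₀, hdd] using hb
  obtain ⟨n, hn⟩ := mem_iUnion.1 hiS
  have hn₀n : n₀ ≤ n := by
    by_contra! hlt
    exact hi _ (Finset.mem_biUnion.2 ⟨n, Finset.mem_range.2 hlt, hn⟩) rfl
  exact (hS n _ hn).trans_lt (hn₀ n hn₀n)

lemma le_elog_of_ofReal_exp_le {r : ℝ} {x : ℝ≥0∞} (h : ENNReal.ofReal (Real.exp r) ≤ x) :
    (r : EReal) ≤ elog x := by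
  unfold elog
  split_ifs with hx
  · exact le_top
  · have := (ENNReal.ofReal_le_iff_le_toReal hx).1 h
    exact EReal.coe_le_coe_iff.2 ((Real.le_log_iff_exp_le ((Real.exp_pos r).trans_le this)).2 this)

lemma entropyOn_eq_top_of_exists_separated {X : Type*} {d : X → X → ℝ} {T : ℝ → X → X}
    {K : Set X} {ε : ℝ} (hε : 0 < ε)
    (h : ∀ c a : ℝ, ∃ t, a ≤ t ∧ 0 < t ∧ ∃ S : Finset X, ↑S ⊆ K ∧ IsSepSet d T t ε ↑S ∧
      Real.exp (c * t) ≤ S.card) :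
    entropyOn d T K = ⊤ := by
  refine top_le_iff.1 (le_iSup₂_of_le ε hε ?_)
  rw [top_le_iff, EReal.eq_top_iff_forall_lt]
  intro c
  refine (EReal.coe_lt_coe_iff.2 (lt_add_one c)).trans_le (le_limsup_of_frequently_le' ?_)
  rw [frequently_atTop]
  intro a
  obtain ⟨t, hat, ht, S, hSK, hS, hcard⟩ := h (c + 1) a
  have hmax : ENNReal.ofReal (Real.exp ((c + 1) * t)) ≤ maxSep d T K t ε :=
    (ENNReal.ofReal_le_of_le_toReal (by simpa using hcard)).trans
      (le_iSup₂_of_le S ⟨hSK, hS⟩ le_rfl)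
  refine ⟨t, hat, ?_⟩
  calc ((c + 1 : ℝ) : EReal) = ((t⁻¹ : ℝ) : EReal) * (((c + 1) * t : ℝ) : EReal) := by
        rw [← EReal.coe_mul]; congr 1; field_simp
    _ ≤ _ := mul_le_mul_of_nonneg_left (le_elog_of_ofReal_exp_le hmax)
        (EReal.coe_nonneg.2 (inv_pos.2 ht).le)

theorem lp_infinite_entropy_of_unbounded_ratio
    (p : ℝ) (hp : 0 < p) (v : ℝ → ℝ) (hv : AdmissibleWeight v)
    (hsup : ∀ B : ℝ, ∃ r ∈ ratioSet v, B < r) :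
    ∃ K : Set (ℝ → ℝ), K ⊆ {f | MemLpW p v f} ∧
      DSeqCompact (fun f g => lpNorm p v (f - g)) K ∧
      entropyOn (fun f g => lpNorm p v (f - g)) translateW K = ⊤ := by
  choose t hat ht S hS hsep hcard using fun n : ℕ =>
    exists_large_separated_set hp hv hsup (Nat.one_div_pos_of_nat (n := n)) n n
  refine ⟨insert 0 (⋃ n, (S n : Set (ℝ → ℝ))), ?_, ?_, ?_⟩
  · rintro f (rfl | hf)
    · exact memLpW_zero hp.ne'
    · obtain ⟨n, hn⟩ := mem_iUnion.1 hf
      exact (hS n f hn).1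
  · refine dSeqCompact_insert_iUnion (fun f g => lpNorm_nonneg fun x hx => (hv.1 x hx).le)
      (fun f => by simp [lpNorm_zero hp.ne']) tendsto_one_div_add_atTop_nhds_zero_nat
      fun n f hf => by simpa using (hS n f hf).2
  · refine entropyOn_eq_top_of_exists_separated one_pos fun c a => ?_
    obtain ⟨n, hn⟩ := exists_nat_ge (max c a)
    refine ⟨t n, ((le_max_right _ _).trans hn).trans (hat n), ht n, S n,
      fun f hf => Or.inr (mem_iUnion.2 ⟨n, hf⟩), hsep n, ?_⟩
    exact (Real.exp_le_exp.2 (mul_le_mul_of_nonneg_right ((le_max_left _ _).trans hn)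
      (ht n).le)).trans (hcard n)
end

section
/- Let v be an admissible weight function, and let 𝒯 = {T_t : t ≥ 0} be the semigroup of left translation operators on X = C_{0,v}(ℝ₊). Then 𝒯 is hypercyclic if and only if there exist f ∈ X and a > 0 such that sup{ |f(x+t)| v(x) : x ∈ [0,a] } does not converge to 0 as t → ∞. -/
open MeasureTheory Filter Set
open scoped ENNReal

/-!
If `f` has a dense orbit, `f` is unbounded on `[0, ∞)`: otherwise no translate `T_t f` could
approximate a function with a large value at `0`. As `|f t| v 0` is at most the supremum over
`[0, 1]` at time `t`, that supremum does not tend to `0`.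

Conversely, if the supremum over `[0, a]` does not tend to `0` while `|f y| v y → 0`, then `v` takes
arbitrarily small values arbitrarily far out, and by the growth bound `v x ≤ M e^{w t} v (x + t)`
it is small on arbitrarily long intervals arbitrarily far out. A hypercyclic vector is then a sum
of disjointly supported translates of a dense sequence `g_k` in which every member recurs: the
`k`-th translate is placed where `v` is so small that, seen through any translation by at most the
previous position, it has weighted size at most `2^{-k}`. At each point at most one translate is
nonzero, so `T_{σ_k} f` is within `2^{-k}` of `g_k`.
-/

open Topology

namespace AdmissibleWeight

variable {v : ℝ → ℝ}

theorem pos (hv : AdmissibleWeight v) {x : ℝ} (hx : 0 ≤ x) : 0 < v x := hv.1 x hx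

theorem exists_le_mul (hv : AdmissibleWeight v) (L : ℝ) :
    ∃ C > 0, ∀ x, 0 ≤ x → ∀ t ∈ Icc 0 L, v x ≤ C * v (x + t) := by
  obtain ⟨hpos, -, M, hM, w, hw, hle⟩ := hv
  refine ⟨M * Real.exp (w * L), by positivity, fun x hx t ht => (hle x hx t ht.1).trans ?_⟩
  have : 0 ≤ v (x + t) := (hpos _ (add_nonneg hx ht.1)).le
  gcongr
  exact ht.2

theorem bddAbove_image_Icc (hv : AdmissibleWeight v) (a : ℝ) : BddAbove (v '' Icc 0 a) := by
  obtain ⟨C, -, hC⟩ := hv.exists_le_mul a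
  refine ⟨C * v a, ?_⟩
  rintro _ ⟨x, hx, rfl⟩
  simpa using hC x hx.1 (a - x) ⟨by linarith [hx.2], by linarith [hx.1]⟩

theorem bddAbove_abs_mul_image_Icc (hv : AdmissibleWeight v) {h : ℝ → ℝ} {a : ℝ}
    (hh : ContinuousOn h (Icc 0 a)) : BddAbove ((fun x => |h x| * v x) '' Icc 0 a) := by
  obtain ⟨C, hC⟩ := isCompact_Icc.exists_bound_of_continuousOn hh
  obtain ⟨D, hD⟩ := hv.bddAbove_image_Icc a
  refine ⟨C * D, ?_⟩
  rintro _ ⟨x, hx, rfl⟩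
  exact mul_le_mul (hC x hx) (hD (mem_image_of_mem v hx)) (hv.pos hx.1).le
    ((norm_nonneg _).trans (hC x hx))

end AdmissibleWeight

theorem bddAbove_image_Ici_of_eventually_le {φ : ℝ → ℝ}
    (hφ : ∀ A, BddAbove (φ '' Icc 0 A)) {C : ℝ} (hC : ∀ᶠ x in atTop, φ x ≤ C) :
    BddAbove (φ '' Ici 0) := by
  obtain ⟨A, hA⟩ := eventually_atTop.1 hC
  refine ((hφ A).union (⟨C, ?_⟩ : BddAbove (φ '' Ici A))).mono ?_
  · rintro _ ⟨x, hx, rfl⟩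
    exact hA x hx
  · rintro _ ⟨x, hx, rfl⟩
    rcases le_total x A with hxA | hxA
    exacts [Or.inl ⟨x, ⟨hx, hxA⟩, rfl⟩, Or.inr ⟨x, hxA, rfl⟩]

theorem c0Norm_le {v f : ℝ → ℝ} {c : ℝ} (h : ∀ x, 0 ≤ x → |f x| * v x ≤ c) :
    c0Norm v f ≤ c :=
  csSup_le ⟨_, 0, self_mem_Ici, rfl⟩ (by
    rintro _ ⟨x, hx, rfl⟩
    exact h x hx)

namespace MemC0

variable {v f g : ℝ → ℝ}

theorem translate (hv : AdmissibleWeight v) (hf : MemC0 v f) {t : ℝ} (ht : 0 ≤ t) :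
    MemC0 v (translateW t f) := by
  refine ⟨hf.1.comp (continuousOn_id.add continuousOn_const)
    fun x (hx : 0 ≤ x) => show 0 ≤ x + t by linarith, ?_⟩
  obtain ⟨C, -, hC⟩ := hv.exists_le_mul t
  have hlim : Tendsto (fun x => C * (|f (x + t)| * v (x + t))) atTop (𝓝 0) := by
    simpa using (hf.2.comp (tendsto_atTop_add_const_right _ t tendsto_id)).const_mul C
  refine squeeze_zero' ?_ ?_ hlim
  · filter_upwards [eventually_ge_atTop 0] with x hx
    exact mul_nonneg (abs_nonneg _) (hv.pos hx).le
  · filter_upwards [eventually_ge_atTop 0] with x hx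
    calc |f (x + t)| * v x ≤ |f (x + t)| * (C * v (x + t)) :=
          mul_le_mul_of_nonneg_left (hC x hx t ⟨ht, le_rfl⟩) (abs_nonneg _)
      _ = C * (|f (x + t)| * v (x + t)) := by ring

theorem sub (hv : AdmissibleWeight v) (hf : MemC0 v f) (hg : MemC0 v g) : MemC0 v (f - g) := by
  refine ⟨hf.1.sub hg.1, squeeze_zero' ?_ ?_ (by simpa using hf.2.add hg.2)⟩
  · filter_upwards [eventually_ge_atTop 0] with x hx
    exact mul_nonneg (abs_nonneg _) (hv.pos hx).le
  · filter_upwards [eventually_ge_atTop 0] with x hx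
    rw [← add_mul]
    exact mul_le_mul_of_nonneg_right (abs_sub _ _) (hv.pos hx).le

theorem bddAbove (hv : AdmissibleWeight v) (hf : MemC0 v f) :
    BddAbove ((fun x => |f x| * v x) '' Ici 0) :=
  bddAbove_image_Ici_of_eventually_le
    (fun _ => hv.bddAbove_abs_mul_image_Icc (hf.1.mono Icc_subset_Ici_self))
    (hf.2.eventually (ge_mem_nhds zero_lt_one))

theorem abs_mul_le_c0Norm (hv : AdmissibleWeight v) (hf : MemC0 v f) {x : ℝ} (hx : 0 ≤ x) :
    |f x| * v x ≤ c0Norm v f :=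
  le_csSup (hf.bddAbove hv) (mem_image_of_mem _ hx)

end MemC0

noncomputable def ramp (z : ℝ) : ℝ := max 0 (min (z + 1) 1)

theorem continuous_ramp : Continuous ramp := by unfold ramp; fun_prop

theorem ramp_mem_Icc (z : ℝ) : ramp z ∈ Icc 0 1 :=
  ⟨le_max_left _ _, max_le zero_le_one (min_le_right _ _)⟩

theorem ramp_of_le {z : ℝ} (hz : z ≤ -1) : ramp z = 0 :=
  max_eq_left ((min_le_left _ _).trans (by linarith))

theorem ramp_of_nonneg {z : ℝ} (hz : 0 ≤ z) : ramp z = 1 := by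
  rw [ramp, min_eq_right (by linarith), max_eq_right zero_le_one]

theorem not_tendsto_of_hypercyclic {v f : ℝ → ℝ} (hv : AdmissibleWeight v) (hf : MemC0 v f)
    (hyp : ∀ g, MemC0 v g → ∀ ε > (0:ℝ), ∃ t, 0 ≤ t ∧
      c0Norm v (translateW t f - g) < ε) :
    ¬ Tendsto (fun t => sSup ((fun x => |f (x + t)| * v x) '' Icc (0:ℝ) 1)) atTop (𝓝 0) := by
  intro hT
  have hv0 : 0 < v 0 := hv.pos le_rfl
  have hS : ∀ t, 0 ≤ t →
      |f t| * v 0 ≤ sSup ((fun x => |f (x + t)| * v x) '' Icc (0:ℝ) 1) :=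
    fun t ht => le_csSup (hv.bddAbove_abs_mul_image_Icc
      ((hf.translate hv ht).1.mono Icc_subset_Ici_self)) ⟨0, ⟨le_rfl, zero_le_one⟩, by simp⟩
  obtain ⟨B, hB⟩ : BddAbove ((fun t => |f t| * v 0) '' Ici 0) := by
    refine bddAbove_image_Ici_of_eventually_le
      (fun A => isCompact_Icc.bddAbove_image ?_) (C := 1) ?_
    · exact ((hf.1.mono Icc_subset_Ici_self).abs).mul continuousOn_const
    · filter_upwards [hT.eventually_lt_const one_pos, eventually_ge_atTop 0] with t ht ht0
      exact (hS t ht0).trans ht.le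
  set g : ℝ → ℝ := fun x => (B + 1) / v 0 * ramp (-x)
  have hg : MemC0 v g := by
    refine ⟨(continuous_const.mul (continuous_ramp.comp continuous_neg)).continuousOn,
      tendsto_const_nhds.congr' ?_⟩
    filter_upwards [eventually_ge_atTop 1] with x hx
    simp [g, ramp_of_le (show -x ≤ -1 by linarith)]
  obtain ⟨t, ht, hlt⟩ := hyp g hg 1 one_pos
  have hnorm := ((hf.translate hv ht).sub hv hg).abs_mul_le_c0Norm hv le_rfl
  have hval : (translateW t f - g) 0 = f t - (B + 1) / v 0 := by
    simp [translateW, g, ramp_of_nonneg]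
  have hft : |f t| * v 0 ≤ B := hB ⟨t, ht, rfl⟩
  have hlow : 1 ≤ |f t - (B + 1) / v 0| * v 0 :=
    calc 1 ≤ ((B + 1) / v 0 - |f t|) * v 0 := by
          rw [sub_mul, div_mul_cancel₀ _ hv0.ne']; linarith
      _ ≤ |f t - (B + 1) / v 0| * v 0 := by
          gcongr
          rw [abs_sub_comm]
          linarith [le_abs_self (f t), le_abs_self ((B + 1) / v 0 - f t)]
  rw [hval] at hnorm
  linarith

theorem frequently_weight_lt_of_not_tendsto {v f : ℝ → ℝ} (hv : AdmissibleWeight v)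
    (hf : MemC0 v f) {a : ℝ} (ha : 0 ≤ a)
    (h : ¬ Tendsto (fun t => sSup ((fun x => |f (x + t)| * v x) '' Icc (0:ℝ) a)) atTop (𝓝 0))
    {η : ℝ} (hη : 0 < η) : ∃ᶠ s in atTop, v s < η := by
  rw [Metric.tendsto_atTop] at h
  push Not at h
  obtain ⟨ε, hε, hfreq⟩ := h
  obtain ⟨C, hC⟩ := hv.bddAbove_image_Icc a
  have hC0 : 0 < C := (hv.pos le_rfl).trans_le (hC (mem_image_of_mem v ⟨le_rfl, ha⟩))
  set δ := ε * η / (2 * C)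
  obtain ⟨A, hA⟩ := eventually_atTop.1 (hf.2.eventually_lt_const (by positivity : 0 < δ))
  refine frequently_atTop.2 fun T => ?_
  obtain ⟨t, ht, hεt⟩ := hfreq (max (max T A) 0)
  simp only [max_le_iff] at ht
  rw [Real.dist_eq, sub_zero, abs_of_nonneg (Real.sSup_nonneg (by
    rintro _ ⟨x, hx, rfl⟩
    exact mul_nonneg (abs_nonneg _) (hv.pos hx.1).le))] at hεt
  -- `|f (x + t)| * v x` is large while `|f (x + t)| * v (x + t)` is small, so `v (x + t)` is small
  obtain ⟨_, ⟨x, hx, rfl⟩, hbig⟩ :=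
    exists_lt_of_lt_csSup ((nonempty_Icc.2 ha).image _) ((half_lt_self hε).trans_le hεt)
  refine ⟨x + t, by linarith [hx.1], ?_⟩
  have hsmall : |f (x + t)| * v (x + t) * v x ≤ δ * C :=
    mul_le_mul (hA _ (by linarith [hx.1])).le (hC (mem_image_of_mem v hx)) (hv.pos hx.1).le
      (by positivity)
  have hδC : δ * C = η * (ε / 2) := by simp only [δ]; field_simp
  have : v (x + t) * (ε / 2) < η * (ε / 2) :=
    calc v (x + t) * (ε / 2) < v (x + t) * (|f (x + t)| * v x) :=
          mul_lt_mul_of_pos_left hbig (hv.pos (by linarith [hx.1]))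
      _ ≤ η * (ε / 2) := by linarith
  exact lt_of_mul_lt_mul_right this (by positivity)

theorem AdmissibleWeight.exists_Icc_le_of_frequently_lt {v : ℝ → ℝ} (hv : AdmissibleWeight v)
    (hsmall : ∀ η > 0, ∃ᶠ s in atTop, v s < η) {ε : ℝ} (hε : 0 < ε) (L T : ℝ) :
    ∃ a ≥ T, ∀ x ∈ Icc a (a + L), v x ≤ ε := by
  obtain ⟨C, hC0, hC⟩ := hv.exists_le_mul L
  obtain ⟨s, hs, hvs⟩ := frequently_atTop.1 (hsmall (ε / C) (by positivity)) (max T 0 + L)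
  refine ⟨s - L, by linarith [le_max_left T 0], fun x hx => ?_⟩
  have hx0 : 0 ≤ x := by linarith [hx.1, le_max_right T 0]
  calc v x ≤ C * v (x + (s - x)) := hC x hx0 (s - x) ⟨by linarith [hx.2], by linarith [hx.1]⟩
    _ ≤ C * (ε / C) := by rw [add_sub_cancel]; exact mul_le_mul_of_nonneg_left hvs.le hC0.le
    _ = ε := by field_simp

noncomputable def bump (c : ℝ) (h : ℝ → ℝ) (y : ℝ) : ℝ := ramp (y - c) * h (y - c)

section Bump

variable {c N y : ℝ} {h : ℝ → ℝ}

theorem continuous_bump (hh : Continuous h) (c : ℝ) : Continuous (bump c h) :=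
  (continuous_ramp.comp (continuous_sub_right c)).mul (hh.comp (continuous_sub_right c))

theorem bump_of_le_sub_one (hy : y ≤ c - 1) : bump c h y = 0 := by
  rw [bump, ramp_of_le (by linarith), zero_mul]

theorem bump_of_add_le (hh : ∀ z, N ≤ z → h z = 0) (hy : c + N ≤ y) : bump c h y = 0 := by
  rw [bump, hh _ (by linarith), mul_zero]

theorem bump_of_le (hy : c ≤ y) : bump c h y = h (y - c) := by
  rw [bump, ramp_of_nonneg (by linarith), one_mul]

theorem abs_bump_le : |bump c h y| ≤ |h (y - c)| := by
  rw [bump, abs_mul, abs_of_nonneg (ramp_mem_Icc _).1]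
  exact mul_le_of_le_one_left (abs_nonneg _) (ramp_mem_Icc _).2

theorem mem_Ioo_of_bump_ne_zero (hh : ∀ z, N ≤ z → h z = 0) (hy : bump c h y ≠ 0) :
    y ∈ Ioo (c - 1) (c + N) := by
  by_contra hy'
  rw [mem_Ioo, not_and_or, not_lt, not_lt] at hy'
  rcases hy' with hy' | hy'
  exacts [hy (bump_of_le_sub_one hy'), hy (bump_of_add_le hh hy')]

end Bump

noncomputable def bumpSeries (σ : ℕ → ℝ) (g : ℕ → ℝ → ℝ) (y : ℝ) : ℝ :=
  ∑ᶠ m, bump (σ (m + 1)) (g m) y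

section BumpSeries

variable {v : ℝ → ℝ} {σ : ℕ → ℝ} {g : ℕ → ℝ → ℝ} {k m n : ℕ} {x y : ℝ}
  (hσ : ∀ m : ℕ, σ m + m + 1 ≤ σ (m + 1))
  (hg : ∀ (m : ℕ) (z : ℝ), m ≤ z → g m z = 0)

include hσ

theorem monotone_of_le_succ_add : Monotone σ :=
  monotone_nat_of_le_succ fun m => by linarith [hσ m, (m.cast_nonneg : (0:ℝ) ≤ m)]

theorem nonneg_of_le_succ_add (hσ0 : 0 ≤ σ 0) (m : ℕ) : 0 ≤ σ m :=
  hσ0.trans (monotone_of_le_succ_add hσ m.zero_le)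

theorem add_le_of_le_succ_add (hmn : m < n) : σ (m + 1) + m + 1 ≤ σ (n + 1) := by
  have := hσ (m + 1)
  have := monotone_of_le_succ_add hσ (show m + 2 ≤ n + 1 by omega)
  push_cast at *
  linarith

include hg

theorem bump_shift_eq_zero_of_lt (hmk : m < k) (hy : σ (k + 1) ≤ y) :
    bump (σ (m + 1)) (g m) y = 0 :=
  bump_of_add_le (hg m) (by linarith [add_le_of_le_succ_add hσ hmk])

theorem bump_shift_eq_zero_of_ne (hmn : m ≠ n) (hm : bump (σ (m + 1)) (g m) y ≠ 0) :
    bump (σ (n + 1)) (g n) y = 0 := by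
  have hy := mem_Ioo_of_bump_ne_zero (hg m) hm
  rcases hmn.lt_or_gt with hmn | hnm
  · exact bump_of_le_sub_one (by linarith [hy.2, add_le_of_le_succ_add hσ hmn])
  · exact bump_of_add_le (hg n) (by linarith [hy.1, add_le_of_le_succ_add hσ hnm])

theorem exists_bumpSeries_eq_bump (y : ℝ) :
    ∃ m, bumpSeries σ g y = bump (σ (m + 1)) (g m) y ∧
      ∀ n ≠ m, bump (σ (n + 1)) (g n) y = 0 := by
  by_cases h : ∃ m, bump (σ (m + 1)) (g m) y ≠ 0
  · obtain ⟨m, hm⟩ := h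
    have hothers : ∀ n ≠ m, bump (σ (n + 1)) (g n) y = 0 :=
      fun n hn => bump_shift_eq_zero_of_ne hσ hg hn.symm hm
    exact ⟨m, finsum_eq_single _ m hothers, hothers⟩
  · push Not at h
    exact ⟨0, by simp [bumpSeries, h], fun n _ => h n⟩

theorem continuous_bumpSeries (hσ0 : 0 ≤ σ 0) (hgc : ∀ m, Continuous (g m)) :
    Continuous (bumpSeries σ g) := by
  refine continuous_finsum (fun m => continuous_bump (hgc m) _) fun y => ?_
  refine ⟨Iio (y + 1), Iio_mem_nhds (lt_add_one y),
    (finite_lt_nat (⌈y⌉₊ + 1)).subset ?_⟩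
  rintro m ⟨z, hz, hzy⟩
  have := (mem_Ioo_of_bump_ne_zero (hg m) hz).1
  have := hσ m
  have := nonneg_of_le_succ_add hσ hσ0 m
  have : (m : ℝ) < ⌈y⌉₊ + 1 := by linarith [Nat.le_ceil y, mem_Iio.1 hzy]
  exact_mod_cast this

-- The interval holds every `x` with `x + s` in the support of bump `m` for some `0 ≤ s ≤ σ m`.
variable (hv : AdmissibleWeight v)
  (hσv : ∀ m, ∀ x ∈ Icc (σ (m + 1) - σ m - 1) (σ (m + 1) + m), ∀ z,
    |g m z| * v x ≤ (1/2) ^ m)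

include hv hσv

theorem abs_bump_shift_mul_le {s : ℝ} (hs₀ : 0 ≤ s) (hs : s ≤ σ m) :
    |bump (σ (m + 1)) (g m) (x + s)| * v x ≤ (1/2) ^ m := by
  by_cases hb : bump (σ (m + 1)) (g m) (x + s) = 0
  · rw [hb, abs_zero, zero_mul]
    positivity
  have hxs := mem_Ioo_of_bump_ne_zero (hg m) hb
  have hx : x ∈ Icc (σ (m + 1) - σ m - 1) (σ (m + 1) + m) :=
    ⟨by linarith [hxs.1], by linarith [hxs.2]⟩
  have hx₀ : 0 ≤ x := by linarith [hx.1, hσ m, (m.cast_nonneg : (0:ℝ) ≤ m)]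
  exact (mul_le_mul_of_nonneg_right abs_bump_le (hv.pos hx₀).le).trans (hσv m x hx _)

theorem abs_bumpSeries_mul_le (hσ0 : 0 ≤ σ 0) (hy : σ (k + 1) ≤ y) :
    |bumpSeries σ g y| * v y ≤ (1/2) ^ k := by
  obtain ⟨m, hm, -⟩ := exists_bumpSeries_eq_bump hσ hg y
  rw [hm]
  rcases lt_or_ge m k with hmk | hkm
  · rw [bump_shift_eq_zero_of_lt hσ hg hmk hy, abs_zero, zero_mul]
    positivity
  · have := abs_bump_shift_mul_le hσ hg hv hσv le_rfl (nonneg_of_le_succ_add hσ hσ0 m) (x := y)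
    rw [add_zero] at this
    exact this.trans (pow_le_pow_of_le_one (by norm_num) (by norm_num) hkm)

theorem abs_bumpSeries_add_sub_mul_le (hσ0 : 0 ≤ σ 0) (hx : 0 ≤ x) :
    |bumpSeries σ g (x + σ (k + 1)) - g k x| * v x ≤ (1/2) ^ k := by
  obtain ⟨m, hm, hothers⟩ := exists_bumpSeries_eq_bump hσ hg (x + σ (k + 1))
  have hk : bump (σ (k + 1)) (g k) (x + σ (k + 1)) = g k x := by
    rw [bump_of_le (by linarith), add_sub_cancel_right]
  rw [hm]
  rcases lt_trichotomy m k with hmk | rfl | hkm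
  · rw [bump_shift_eq_zero_of_lt hσ hg hmk (by linarith), ← hk, hothers k hmk.ne', sub_zero,
      abs_zero, zero_mul]
    positivity
  · rw [hk, sub_self, abs_zero, zero_mul]
    positivity
  · rw [← hk, hothers k hkm.ne, sub_zero]
    exact (abs_bump_shift_mul_le hσ hg hv hσv (nonneg_of_le_succ_add hσ hσ0 _)
      (monotone_of_le_succ_add hσ hkm)).trans
      (pow_le_pow_of_le_one (by norm_num) (by norm_num) hkm.le)

theorem memC0_bumpSeries (hσ0 : 0 ≤ σ 0) (hgc : ∀ m, Continuous (g m)) :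
    MemC0 v (bumpSeries σ g) := by
  refine ⟨(continuous_bumpSeries hσ hg hσ0 hgc).continuousOn,
    Metric.tendsto_atTop.2 fun ε hε => ?_⟩
  obtain ⟨K, hK⟩ := exists_pow_lt_of_lt_one hε (by norm_num : (1/2 : ℝ) < 1)
  refine ⟨max (σ (K + 1)) 0, fun y hy => ?_⟩
  rw [ge_iff_le, max_le_iff] at hy
  rw [Real.dist_eq, sub_zero, abs_of_nonneg (mul_nonneg (abs_nonneg _) (hv.pos hy.2).le)]
  exact (abs_bumpSeries_mul_le hσ hg hv hσv hσ0 hy.1).trans_lt hK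

end BumpSeries

theorem exists_bump_shifts {v : ℝ → ℝ} (hv : AdmissibleWeight v)
    (hsmall : ∀ η > 0, ∃ᶠ s in atTop, v s < η) {g : ℕ → ℝ → ℝ}
    (hgb : ∀ m, ∃ B, ∀ z, |g m z| ≤ B) :
    ∃ σ : ℕ → ℝ, σ 0 = 0 ∧ (∀ m : ℕ, σ m + m + 1 ≤ σ (m + 1)) ∧
      ∀ m, ∀ x ∈ Icc (σ (m + 1) - σ m - 1) (σ (m + 1) + m), ∀ z,
        |g m z| * v x ≤ (1/2) ^ m := by
  have step : ∀ (m : ℕ) (p : ℝ), ∃ τ, p + m + 1 ≤ τ ∧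
      ∀ x ∈ Icc (τ - p - 1) (τ + m), ∀ z, |g m z| * v x ≤ (1/2) ^ m := by
    intro m p
    obtain ⟨B, hB⟩ := hgb m
    have hB0 : 0 ≤ B := (abs_nonneg _).trans (hB 0)
    obtain ⟨a, ham, ha⟩ := hv.exists_Icc_le_of_frequently_lt hsmall
      (ε := (1/2) ^ m / (B + 1)) (by positivity) (p + 1 + m) m
    refine ⟨a + p + 1, by linarith, fun x hx z => ?_⟩
    have hx' : x ∈ Icc a (a + (p + 1 + m)) := ⟨by linarith [hx.1], by linarith [hx.2]⟩
    have hx₀ : 0 ≤ x := by linarith [hx'.1, (m.cast_nonneg : (0:ℝ) ≤ m)]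
    calc |g m z| * v x ≤ B * ((1/2) ^ m / (B + 1)) :=
          mul_le_mul (hB z) (ha x hx') (hv.pos hx₀).le hB0
      _ ≤ (B + 1) * ((1/2) ^ m / (B + 1)) := by gcongr; linarith
      _ = (1/2) ^ m := by field_simp
  choose τ hτ using step
  let σ : ℕ → ℝ := fun n => Nat.rec 0 (fun m p => τ m p) n
  exact ⟨σ, rfl, fun m => (hτ m (σ m)).1, fun m => (hτ m (σ m)).2⟩

noncomputable def cutoffExtend (n : ℕ) (u : C(Icc (0:ℝ) n, ℝ)) (x : ℝ) : ℝ :=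
  IccExtend (Nat.cast_nonneg n) u x * ramp (n - 1 - x)

section CutoffExtend

variable {n : ℕ} {u : C(Icc (0:ℝ) n, ℝ)} {x : ℝ}

theorem continuous_cutoffExtend : Continuous (cutoffExtend n u) :=
  (u.continuous.Icc_extend').mul (continuous_ramp.comp (continuous_sub_left _))

theorem cutoffExtend_of_le (hx : n ≤ x) : cutoffExtend n u x = 0 := by
  rw [cutoffExtend, ramp_of_le (by linarith), mul_zero]

theorem abs_cutoffExtend_le : |cutoffExtend n u x| ≤ ‖u‖ := by
  rw [cutoffExtend, abs_mul, abs_of_nonneg (ramp_mem_Icc _).1]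
  exact (mul_le_mul (u.norm_coe_le_norm _) (ramp_mem_Icc _).2 (ramp_mem_Icc _).1
    (norm_nonneg _)).trans_eq (mul_one _)

theorem abs_cutoffExtend_sub_mul_le {v G : ℝ → ℝ} (hv : AdmissibleWeight v) {C δ ε : ℝ}
    (hC : ∀ x ∈ Icc (0:ℝ) n, v x ≤ C) (hδ : 0 ≤ δ)
    (hu : ∀ x (hx : x ∈ Icc (0:ℝ) n), |u ⟨x, hx⟩ - G x| ≤ δ)
    (hG : ∀ x : ℝ, n - 1 ≤ x → |G x| * v x ≤ ε) (hx₀ : 0 ≤ x) :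
    |cutoffExtend n u x - G x| * v x ≤ δ * C + ε := by
  have hvx := (hv.pos hx₀).le
  rcases le_or_gt (n : ℝ) x with hnx | hxn
  · rw [cutoffExtend_of_le hnx, zero_sub, abs_neg]
    have hC₀ : 0 ≤ C := (hv.pos le_rfl).le.trans (hC 0 ⟨le_rfl, n.cast_nonneg⟩)
    linarith [hG x (by linarith), mul_nonneg hδ hC₀]
  have hx : x ∈ Icc (0:ℝ) n := ⟨hx₀, hxn.le⟩
  set c := ramp (n - 1 - x)
  have hc := ramp_mem_Icc (n - 1 - x)
  have hcG : (1 - c) * (|G x| * v x) ≤ ε := by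
    rcases le_or_gt x (n - 1) with hx1 | hx1
    · rw [show c = 1 from ramp_of_nonneg (by linarith), sub_self, zero_mul]
      linarith [hG n (by linarith), mul_nonneg (abs_nonneg (G n)) (hv.pos n.cast_nonneg).le]
    · exact (mul_le_of_le_one_left (mul_nonneg (abs_nonneg _) hvx) (by linarith [hc.1])).trans
        (hG x hx1.le)
  have hdiff : |cutoffExtend n u x - G x| ≤ δ + (1 - c) * |G x| := by
    rw [cutoffExtend, IccExtend_of_mem _ _ hx,
      show u ⟨x, hx⟩ * c - G x = (u ⟨x, hx⟩ - G x) * c - (1 - c) * G x by ring]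
    refine (abs_sub _ _).trans ?_
    rw [abs_mul, abs_mul, abs_of_nonneg hc.1, abs_of_nonneg (by linarith [hc.2] : 0 ≤ 1 - c)]
    gcongr
    exact mul_le_of_le_one_right (abs_nonneg _) hc.2 |>.trans (hu x hx)
  calc |cutoffExtend n u x - G x| * v x ≤ (δ + (1 - c) * |G x|) * v x :=
        mul_le_mul_of_nonneg_right hdiff hvx
    _ = δ * v x + (1 - c) * (|G x| * v x) := by ring
    _ ≤ δ * C + ε := add_le_add (mul_le_mul_of_nonneg_left (hC x hx) hδ) hcG

end CutoffExtend

noncomputable def cutoffDenseSeq (nj : ℕ × ℕ) : ℝ → ℝ :=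
  cutoffExtend nj.1 (TopologicalSpace.denseSeq C(Icc (0:ℝ) nj.1, ℝ) nj.2)

/-- Every `cutoffDenseSeq (n, j)` recurs in this sequence with arbitrarily large index `k`,
and `n ≤ k`. -/
noncomputable def denseFamily (k : ℕ) : ℝ → ℝ :=
  cutoffDenseSeq (Nat.unpair (Nat.unpair k).2)

theorem denseFamily_of_le {k : ℕ} {y : ℝ} (hy : k ≤ y) : denseFamily k y = 0 := by
  refine cutoffExtend_of_le (le_trans ?_ hy)
  exact_mod_cast (Nat.unpair_left_le _).trans (Nat.unpair_right_le k)

theorem frequently_denseFamily_close {v G : ℝ → ℝ} (hv : AdmissibleWeight v) (hG : MemC0 v G)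
    {ε : ℝ} (hε : 0 < ε) :
    ∃ᶠ k in atTop, ∀ x, 0 ≤ x → |denseFamily k x - G x| * v x ≤ ε := by
  obtain ⟨A, hA⟩ := eventually_atTop.1 (hG.2.eventually (ge_mem_nhds (half_pos hε)))
  set n := ⌈A⌉₊ + 1
  obtain ⟨C, hC⟩ := hv.bddAbove_image_Icc n
  have hC0 : 0 < C := (hv.pos le_rfl).trans_le (hC (mem_image_of_mem v ⟨le_rfl, n.cast_nonneg⟩))
  let G₀ : C(Icc (0:ℝ) n, ℝ) := ⟨(Icc (0:ℝ) n).domRestrict G,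
    (hG.1.mono Icc_subset_Ici_self).domRestrict⟩
  obtain ⟨j, hj⟩ := (TopologicalSpace.denseRange_denseSeq _).exists_dist_lt G₀
    (by positivity : 0 < ε / (2 * C))
  refine frequently_atTop.2 fun K => ⟨Nat.pair K (Nat.pair n j), Nat.left_le_pair _ _,
    fun x hx => ?_⟩
  simp only [denseFamily, Nat.unpair_pair]
  rw [cutoffDenseSeq]
  have hu : ∀ x (hx : x ∈ Icc (0:ℝ) n),
      |TopologicalSpace.denseSeq C(Icc (0:ℝ) n, ℝ) j ⟨x, hx⟩ - G x| ≤ ε / (2 * C) :=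
    fun x hx => (ContinuousMap.dist_apply_le_dist (g := G₀) ⟨x, hx⟩).trans
      (by rw [dist_comm]; exact hj.le)
  have hG' : ∀ x : ℝ, n - 1 ≤ x → |G x| * v x ≤ ε / 2 := fun x hx =>
    hA x (by linarith [Nat.le_ceil A, show (n : ℝ) = ⌈A⌉₊ + 1 by push_cast [n]; ring])
  calc _ ≤ ε / (2 * C) * C + ε / 2 :=
        abs_cutoffExtend_sub_mul_le hv (fun x hx => hC (mem_image_of_mem v hx)) (by positivity)
          hu hG' hx
    _ = ε := by field_simp; ring

theorem exists_hypercyclic_of_frequently_weight_lt {v : ℝ → ℝ} (hv : AdmissibleWeight v)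
    (hsmall : ∀ η > 0, ∃ᶠ s in atTop, v s < η) :
    ∃ f, MemC0 v f ∧ ∀ G, MemC0 v G → ∀ ε > (0:ℝ), ∃ t, 0 ≤ t ∧
      c0Norm v (translateW t f - G) < ε := by
  obtain ⟨σ, hσ0, hσ, hσv⟩ := exists_bump_shifts hv hsmall (g := denseFamily)
    fun k => ⟨_, fun _ => abs_cutoffExtend_le⟩
  have hg : ∀ (k : ℕ) (y : ℝ), k ≤ y → denseFamily k y = 0 := fun _ _ => denseFamily_of_le
  refine ⟨bumpSeries σ denseFamily,
    memC0_bumpSeries hσ hg hv hσv hσ0.ge fun _ => continuous_cutoffExtend,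
    fun G hG ε hε => ?_⟩
  have hpow : ∀ᶠ k in atTop, ((1:ℝ)/2) ^ k ≤ ε / 4 :=
    (tendsto_pow_atTop_nhds_zero_of_lt_one (by norm_num) (by norm_num)).eventually
      (ge_mem_nhds (by positivity))
  obtain ⟨k, hk, hpowk⟩ :=
    ((frequently_denseFamily_close hv hG (by positivity : 0 < ε / 4)).and_eventually hpow).exists
  refine ⟨σ (k + 1), nonneg_of_le_succ_add hσ hσ0.ge _,
    (c0Norm_le fun x hx => ?_).trans_lt (by linarith : ε / 2 < ε)⟩
  calc |(translateW (σ (k + 1)) (bumpSeries σ denseFamily) - G) x| * v x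
      ≤ |bumpSeries σ denseFamily (x + σ (k + 1)) - denseFamily k x| * v x
        + |denseFamily k x - G x| * v x := by
        rw [← add_mul]
        exact mul_le_mul_of_nonneg_right (abs_sub_le _ _ _) (hv.pos hx).le
    _ ≤ ε / 4 + ε / 4 :=
        add_le_add ((abs_bumpSeries_add_sub_mul_le hσ hg hv hσv hσ0.ge hx).trans hpowk)
          (hk x hx)
    _ = ε / 2 := by ring

theorem c0_hypercyclic_iff_not_tendsto_zero_on_interval
    (v : ℝ → ℝ) (hv : AdmissibleWeight v) :
    (∃ f, MemC0 v f ∧ ∀ g, MemC0 v g → ∀ ε > (0:ℝ), ∃ t, 0 ≤ t ∧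
        c0Norm v (translateW t f - g) < ε) ↔
      (∃ f, MemC0 v f ∧ ∃ a > (0:ℝ),
        ¬ Filter.Tendsto
          (fun t => sSup ((fun x => |f (x + t)| * v x) '' Set.Icc (0:ℝ) a))
          Filter.atTop (nhds 0)) := by
  constructor
  · rintro ⟨f, hf, hyp⟩
    exact ⟨f, hf, 1, one_pos, not_tendsto_of_hypercyclic hv hf hyp⟩
  · rintro ⟨f, hf, a, ha, hnt⟩
    exact exists_hypercyclic_of_frequently_weight_lt hv fun η hη =>
      frequently_weight_lt_of_not_tendsto hv hf ha.le hnt hη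
end
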